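/- arXiv:2411.19801 — 7 statements merged into one kernel-verified Lean document; each statement's English description precedes it below -/
import Mathlib

section
/- Let 𝒢 be a class of graphs closed under subgraphs such that every G ∈ 𝒢 satisfies e(H) ≤ m₁·v(H) for all subgraphs H and e(H) ≤ m₂·v(H) for all bipartite subgraphs H, with m₁ ≤ 2m₂. If G ∈ 𝒢 and 1 ≤ t ≤ ⌊2m₁⌋, then the disjoint union G ∪ K_t also satisfies both density conditions. -/
/-!
A subgraph `H` of `G ∪ K_t` splits into a subgraph of `G`, which satisfies the density bounds by
hypothesis, and a subgraph of `K_t` on `s ≤ t ≤ 2m₁` vertices. The latter has at most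
`s² / 2 ≤ m₁ s` edges, and at most `s² / 4 ≤ m₁ s / 2 ≤ m₂ s` edges when it is bipartite.
Edges and vertices of the two parts add up.
-/

theorem Nat.cast_sq_le_mul_of_le_floor {R : Type*} [Semiring R] [LinearOrder R] [FloorSemiring R]
    [IsStrictOrderedRing R] {a : R} {s : ℕ} (h : s ≤ ⌊a⌋₊) : (s : R) ^ 2 ≤ a * s := by
  rcases Nat.eq_zero_or_pos s with rfl | hs
  · simp
  rw [sq]
  exact mul_le_mul_of_nonneg_right ((Nat.le_floor_iff' hs.ne').1 h) s.cast_nonneg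

namespace SimpleGraph

variable {V W : Type*}

theorem two_mul_ncard_edgeSet_le [Finite V] (G : SimpleGraph V) :
    2 * G.edgeSet.ncard ≤ Nat.card V ^ 2 := by
  classical
  have := Fintype.ofFinite V
  rw [← coe_edgeFinset, Set.ncard_coe_finset, Nat.card_eq_fintype_card]
  calc 2 * G.edgeFinset.card ≤ 2 * (Fintype.card V).choose 2 := by
        gcongr; exact card_edgeFinset_le_card_choose_two
    _ ≤ Fintype.card V * (Fintype.card V - 1) := by
        rw [Nat.choose_two_right]; exact Nat.mul_div_le _ _
    _ ≤ Fintype.card V ^ 2 := by rw [sq]; gcongr; omega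

theorem IsBipartite.four_mul_ncard_edgeSet_le [Finite V] {G : SimpleGraph V}
    (h : G.IsBipartite) : 4 * G.edgeSet.ncard ≤ Nat.card V ^ 2 := by
  have := h.four_mul_encard_edgeSet_le
  rw [← G.edgeSet.toFinite.cast_ncard_eq, ENat.card_eq_coe_natCard] at this
  exact_mod_cast this

namespace Subgraph

variable {G : SimpleGraph V}

theorem ncard_edgeSet_coe (H : G.Subgraph) : H.coe.edgeSet.ncard = H.edgeSet.ncard := by
  rw [← H.image_coe_edgeSet_coe,
    Set.ncard_image_of_injective _ (Sym2.map.injective Subtype.val_injective)]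

theorem two_mul_ncard_edgeSet_le [Finite V] (H : G.Subgraph) :
    2 * H.edgeSet.ncard ≤ H.verts.ncard ^ 2 := by
  have := H.coe.two_mul_ncard_edgeSet_le
  rwa [ncard_edgeSet_coe, Nat.card_coe_set_eq] at this

theorem four_mul_ncard_edgeSet_le_of_isBipartite [Finite V] (H : G.Subgraph)
    (h : H.coe.IsBipartite) : 4 * H.edgeSet.ncard ≤ H.verts.ncard ^ 2 := by
  have := h.four_mul_ncard_edgeSet_le
  rwa [ncard_edgeSet_coe, Nat.card_coe_set_eq] at this

theorem ncard_edgeSet_le_of_ncard_verts_le_floor [Finite V] (H : G.Subgraph) {m : ℝ}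
    (h : H.verts.ncard ≤ ⌊2 * m⌋₊) : (H.edgeSet.ncard : ℝ) ≤ m * H.verts.ncard := by
  have hE : (2 * H.edgeSet.ncard : ℝ) ≤ H.verts.ncard ^ 2 := mod_cast H.two_mul_ncard_edgeSet_le
  linarith [Nat.cast_sq_le_mul_of_le_floor h]

theorem ncard_edgeSet_le_of_isBipartite_of_ncard_verts_le_floor [Finite V] (H : G.Subgraph)
    (hH : H.coe.IsBipartite) {m : ℝ} (h : H.verts.ncard ≤ ⌊2 * m⌋₊) :
    (H.edgeSet.ncard : ℝ) ≤ m / 2 * H.verts.ncard := by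
  have hE : (4 * H.edgeSet.ncard : ℝ) ≤ H.verts.ncard ^ 2 :=
    mod_cast H.four_mul_ncard_edgeSet_le_of_isBipartite hH
  linarith [Nat.cast_sq_le_mul_of_le_floor h]

theorem colorable_coe_comap {G' : SimpleGraph W} {n : ℕ} (H : G'.Subgraph) (f : G →g G')
    (h : H.coe.Colorable n) : (H.comap f).coe.Colorable n :=
  h.of_hom ⟨fun v ↦ ⟨f v, v.2⟩, fun huv ↦ huv.2⟩

variable {G' : SimpleGraph W}

def sumLeft (H : (G ⊕g G').Subgraph) : G.Subgraph := H.comap Embedding.sumInl.toHom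

def sumRight (H : (G ⊕g G').Subgraph) : G'.Subgraph := H.comap Embedding.sumInr.toHom

theorem eq_map_sumLeft_sup_map_sumRight (H : (G ⊕g G').Subgraph) :
    H = H.sumLeft.map Embedding.sumInl.toHom ⊔ H.sumRight.map Embedding.sumInr.toHom := by
  ext x y
  · cases x <;> simp [sumLeft, sumRight]
  · have := H.adj_sub (v := x) (w := y)
    cases x <;> cases y <;> simp_all [sumLeft, sumRight, Relation.Map]

theorem verts_eq_image_sumLeft_union (H : (G ⊕g G').Subgraph) :
    H.verts = Sum.inl '' H.sumLeft.verts ∪ Sum.inr '' H.sumRight.verts :=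
  congrArg verts H.eq_map_sumLeft_sup_map_sumRight

theorem edgeSet_eq_image_sumLeft_union (H : (G ⊕g G').Subgraph) :
    H.edgeSet =
      Sym2.map Sum.inl '' H.sumLeft.edgeSet ∪ Sym2.map Sum.inr '' H.sumRight.edgeSet := by
  nth_rw 1 [H.eq_map_sumLeft_sup_map_sumRight]
  rw [edgeSet_sup, edgeSet_map, edgeSet_map]
  rfl

theorem ncard_verts_eq_add [Finite V] [Finite W] (H : (G ⊕g G').Subgraph) :
    H.verts.ncard = H.sumLeft.verts.ncard + H.sumRight.verts.ncard := by
  have hdisj : Disjoint (Sum.inl '' H.sumLeft.verts) (Sum.inr '' H.sumRight.verts) :=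
    Set.isCompl_range_inl_range_inr.disjoint.mono (Set.image_subset_range _ _)
      (Set.image_subset_range _ _)
  rw [verts_eq_image_sumLeft_union, Set.ncard_union_eq hdisj,
    Set.ncard_image_of_injective _ Sum.inl_injective,
    Set.ncard_image_of_injective _ Sum.inr_injective]

theorem ncard_edgeSet_eq_add [Finite V] [Finite W] (H : (G ⊕g G').Subgraph) :
    H.edgeSet.ncard = H.sumLeft.edgeSet.ncard + H.sumRight.edgeSet.ncard := by
  have hdisj : Disjoint (Sym2.map Sum.inl '' H.sumLeft.edgeSet)
      (Sym2.map Sum.inr '' H.sumRight.edgeSet) := by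
    refine Set.disjoint_left.mpr ?_
    rintro _ ⟨e, -, rfl⟩ ⟨e', -, he⟩
    induction e using Sym2.ind
    induction e' using Sym2.ind
    simp at he
  rw [edgeSet_eq_image_sumLeft_union, Set.ncard_union_eq hdisj,
    Set.ncard_image_of_injective _ (Sym2.map.injective Sum.inl_injective),
    Set.ncard_image_of_injective _ (Sym2.map.injective Sum.inr_injective)]

end Subgraph

end SimpleGraph

theorem stmt_3_general {V : Type*} [Fintype V] (G : SimpleGraph V) (m₁ m₂ : ℝ)
    (h12 : m₁ ≤ 2 * m₂) (t : ℕ) (ht2 : t ≤ ⌊2 * m₁⌋₊)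
    (hdens₁ : ∀ H : G.Subgraph, (H.edgeSet.ncard : ℝ) ≤ m₁ * H.verts.ncard)
    (hdens₂ : ∀ H : G.Subgraph, H.coe.Colorable 2 →
      (H.edgeSet.ncard : ℝ) ≤ m₂ * H.verts.ncard) :
    (∀ H : (G ⊕g (⊤ : SimpleGraph (Fin t))).Subgraph,
        (H.edgeSet.ncard : ℝ) ≤ m₁ * H.verts.ncard) ∧
    (∀ H : (G ⊕g (⊤ : SimpleGraph (Fin t))).Subgraph, H.coe.Colorable 2 →
        (H.edgeSet.ncard : ℝ) ≤ m₂ * H.verts.ncard) := by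
  have hsmall (H : (G ⊕g (⊤ : SimpleGraph (Fin t))).Subgraph) :
      H.sumRight.verts.ncard ≤ ⌊2 * m₁⌋₊ :=
    (Set.ncard_le_card _).trans (by simpa using ht2)
  refine ⟨fun H ↦ ?_, fun H hH ↦ ?_⟩
  · have hR := H.sumRight.ncard_edgeSet_le_of_ncard_verts_le_floor (hsmall H)
    rw [H.ncard_edgeSet_eq_add, H.ncard_verts_eq_add]
    push_cast
    linarith [hdens₁ H.sumLeft]
  · have hR := H.sumRight.ncard_edgeSet_le_of_isBipartite_of_ncard_verts_le_floor
      (H.colorable_coe_comap _ hH) (hsmall H)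
    have hm : m₁ / 2 * H.sumRight.verts.ncard ≤ m₂ * H.sumRight.verts.ncard := by
      gcongr
      linarith
    rw [H.ncard_edgeSet_eq_add, H.ncard_verts_eq_add]
    push_cast
    linarith [hdens₂ H.sumLeft (H.colorable_coe_comap _ hH)]

/-- If `G` satisfies both density conditions (so it lies in the subgraph-closed class
`𝒢_{m₁,m₂}`), `m₁ ≤ 2m₂`, and `1 ≤ t ≤ ⌊2m₁⌋`, then the disjoint union `G ∪ K_t`
also satisfies both density conditions. -/
theorem stmt_3 {V : Type*} [Fintype V] (G : SimpleGraph V) (m₁ m₂ : ℝ)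
    (h12 : m₁ ≤ 2 * m₂) (t : ℕ) (ht1 : 1 ≤ t) (ht2 : t ≤ ⌊2 * m₁⌋₊)
    (hdens₁ : ∀ H : G.Subgraph, (H.edgeSet.ncard : ℝ) ≤ m₁ * H.verts.ncard)
    (hdens₂ : ∀ H : G.Subgraph, H.coe.Colorable 2 →
      (H.edgeSet.ncard : ℝ) ≤ m₂ * H.verts.ncard) :
    (∀ H : (G ⊕g (⊤ : SimpleGraph (Fin t))).Subgraph,
        (H.edgeSet.ncard : ℝ) ≤ m₁ * H.verts.ncard) ∧
    (∀ H : (G ⊕g (⊤ : SimpleGraph (Fin t))).Subgraph, H.coe.Colorable 2 →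
        (H.edgeSet.ncard : ℝ) ≤ m₂ * H.verts.ncard) :=
  stmt_3_general G m₁ m₂ h12 t ht2 hdens₁ hdens₂
end

section
/- Let G be a d-degenerate graph with n = rs − t vertices where ⌊d⌋ < t ≤ r − 1 and r ≥ d + 1. If the subgraph H of G induced by the first r(s−1) vertices of a degeneracy ordering admits an equitable r-coloring with all color classes of size s−1, then this coloring can be greedily extended to an equitable r-coloring of the subgraph induced by the first r(s−1)+(r−t) vertices where the new vertices get pairwise distinct colors. -/
/-!
Colour the new vertices greedily in order, treating them as a clique added to `G`. The new
vertex at position `r(s-1) + j` has at most `d` earlier neighbours in `G` and `j` earlier new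
vertices, and `d + j < t + (r - t) = r`, so some colour is always free. Since the new vertices get
distinct colours, every class grows from `s - 1` by at most one.
-/

open Finset

namespace SimpleGraph

variable {n r : ℕ}

theorem exists_extend_coloring_of_card_earlier_neighbors_lt (H : SimpleGraph (Fin n))
    [DecidableRel H.Adj] {k N : ℕ} (c : Fin n → Fin r)
    (hc : ∀ u v : Fin n, (u : ℕ) < k → (v : ℕ) < k → H.Adj u v → c u ≠ c v)
    (hback : ∀ v : Fin n, k ≤ (v : ℕ) → (v : ℕ) < N →
      #(univ.filter fun u => H.Adj v u ∧ (u : ℕ) < v) < r) :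
    ∃ c' : Fin n → Fin r, (∀ v : Fin n, (v : ℕ) < k → c' v = c v) ∧
      ∀ u v : Fin n, (u : ℕ) < N → (v : ℕ) < N → H.Adj u v → c' u ≠ c' v := by
  induction N with
  | zero => exact ⟨c, fun _ _ => rfl, fun u _ hu => absurd hu (Nat.not_lt_zero _)⟩
  | succ N ih =>
    by_cases hNk : N < k
    · exact ⟨c, fun _ _ => rfl, fun u v hu hv => hc u v (by omega) (by omega)⟩
    obtain ⟨c', hagree, hproper⟩ := ih fun v hkv hvN => hback v hkv (by omega)
    by_cases hNn : N < n
    swap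
    · exact ⟨c', hagree, fun u v hu hv => hproper u v (by omega) (by omega)⟩
    set w : Fin n := ⟨N, hNn⟩
    set F := (univ.filter fun u => H.Adj w u ∧ (u : ℕ) < w).image c'
    have hF : #F < #(univ : Finset (Fin r)) :=
      card_image_le.trans_lt ((hback w (not_lt.mp hNk) N.lt_succ_self).trans_eq (card_fin r).symm)
    obtain ⟨a, -, haF⟩ := exists_mem_notMem_of_card_lt_card hF
    have hw : ∀ v : Fin n, (v : ℕ) < N + 1 → v ≠ w → (v : ℕ) < N := fun v hv hvw =>
      lt_of_le_of_ne (Nat.lt_succ_iff.mp hv) fun h => hvw (Fin.ext h)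
    have hnew : ∀ v : Fin n, (v : ℕ) < N + 1 → H.Adj w v →
        Function.update c' w a w ≠ Function.update c' w a v := by
      intro v hv hadj
      have hvN := hw v hv (H.ne_of_adj hadj).symm
      rw [Function.update_self, Function.update_of_ne (H.ne_of_adj hadj).symm]
      rintro rfl
      exact haF (mem_image_of_mem c' (by simp [hadj, w, hvN]))
    refine ⟨Function.update c' w a, fun v hv => ?_, fun u v hu hv hadj => ?_⟩
    · rw [Function.update_of_ne (fun h => by simp [h, w] at hv; omega), hagree v hv]
    rcases eq_or_ne u w with rfl | huw
    · exact hnew v hv hadj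
    rcases eq_or_ne v w with rfl | hvw
    · exact (hnew u hu hadj.symm).symm
    rw [Function.update_of_ne huw, Function.update_of_ne hvw]
    exact hproper u v (hw u hu huw) (hw v hv hvw) hadj

variable {V : Type*}

def cliqueOn (S : Set V) : SimpleGraph V := fromRel fun u v => u ∈ S ∧ v ∈ S

@[simp]
theorem cliqueOn_adj {S : Set V} {u v : V} :
    (cliqueOn S).Adj u v ↔ u ≠ v ∧ u ∈ S ∧ v ∈ S := by
  simp only [cliqueOn, fromRel_adj, and_comm (a := v ∈ S), or_self]

instance [DecidableEq V] (S : Set V) [DecidablePred (· ∈ S)] : DecidableRel (cliqueOn S).Adj :=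
  fun _ _ => decidable_of_iff' _ cliqueOn_adj

theorem card_earlier_neighbors_sup_cliqueOn_le (G : SimpleGraph (Fin n)) [DecidableRel G.Adj]
    (k : ℕ) (v : Fin n) :
    #(univ.filter fun u => (G ⊔ cliqueOn {w : Fin n | k ≤ (w : ℕ)}).Adj v u ∧ (u : ℕ) < v) ≤
      #(univ.filter fun u => G.Adj v u ∧ (u : ℕ) < v) + ((v : ℕ) - k) := by
  have hsub : (univ.filter fun u => (G ⊔ cliqueOn {w : Fin n | k ≤ (w : ℕ)}).Adj v u ∧ (u : ℕ) < v) ⊆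
      (univ.filter fun u => G.Adj v u ∧ (u : ℕ) < v) ∪
        univ.filter fun u : Fin n => k ≤ (u : ℕ) ∧ (u : ℕ) < v := by
    intro u
    simp only [mem_filter, mem_univ, true_and, mem_union, sup_adj, cliqueOn_adj,
      Set.mem_ofPred_eq]
    tauto
  have hnew : #(univ.filter fun u : Fin n => k ≤ (u : ℕ) ∧ (u : ℕ) < v) ≤ (v : ℕ) - k := by
    rw [← Nat.card_Ico, ← card_map Fin.valEmbedding]
    refine card_le_card fun m hm => ?_
    simp only [mem_map, mem_filter, mem_univ, true_and, Fin.valEmbedding_apply] at hm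
    obtain ⟨u, ⟨hku, huv⟩, rfl⟩ := hm
    exact mem_Ico.mpr ⟨hku, huv⟩
  exact (card_le_card hsub).trans ((card_union_le _ _).trans (Nat.add_le_add_left hnew _))

end SimpleGraph

open SimpleGraph

theorem card_filter_lt_and_eq_le_succ {n r k N : ℕ} (f : Fin n → Fin r)
    (hinj : ∀ u v : Fin n, k ≤ (u : ℕ) → (u : ℕ) < N → k ≤ (v : ℕ) → (v : ℕ) < N → u ≠ v →
      f u ≠ f v) (i : Fin r) :
    #(univ.filter fun v : Fin n => (v : ℕ) < N ∧ f v = i) ≤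
      #(univ.filter fun v : Fin n => (v : ℕ) < k ∧ f v = i) + 1 := by
  have hsub : (univ.filter fun v : Fin n => (v : ℕ) < N ∧ f v = i) ⊆
      (univ.filter fun v : Fin n => (v : ℕ) < k ∧ f v = i) ∪
        univ.filter fun v : Fin n => k ≤ (v : ℕ) ∧ (v : ℕ) < N ∧ f v = i := by
    intro v
    simp only [mem_filter, mem_univ, true_and, mem_union]
    omega
  have hnew : #(univ.filter fun v : Fin n => k ≤ (v : ℕ) ∧ (v : ℕ) < N ∧ f v = i) ≤ 1 := by
    refine card_le_one.mpr fun u hu v hv => ?_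
    simp only [mem_filter, mem_univ, true_and] at hu hv
    by_contra huv
    exact hinj u v hu.1 hu.2.1 hv.1 hv.2.1 huv (hu.2.2.trans hv.2.2.symm)
  exact (card_le_card hsub).trans ((card_union_le _ _).trans (Nat.add_le_add_left hnew _))

theorem stmt_5_general (d r s t n : ℕ)
    (ht1 : d < t)
    (G : SimpleGraph (Fin n)) [DecidableRel G.Adj]
    (hdegord : ∀ i : Fin n,
      (Finset.univ.filter (fun j : Fin n => G.Adj i j ∧ (j : ℕ) < (i : ℕ))).card ≤ d)
    (c : Fin n → Fin r)
    (hproper : ∀ u v : Fin n, (u : ℕ) < r * (s - 1) → (v : ℕ) < r * (s - 1) →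
      G.Adj u v → c u ≠ c v)
    (hsizes : ∀ i : Fin r,
      (Finset.univ.filter (fun v : Fin n => (v : ℕ) < r * (s - 1) ∧ c v = i)).card = s - 1) :
    ∃ c' : Fin n → Fin r,
      (∀ v : Fin n, (v : ℕ) < r * (s - 1) → c' v = c v) ∧
      (∀ u v : Fin n, (u : ℕ) < r * (s - 1) + (r - t) → (v : ℕ) < r * (s - 1) + (r - t) →
        G.Adj u v → c' u ≠ c' v) ∧
      (∀ u v : Fin n, r * (s - 1) ≤ (u : ℕ) → (u : ℕ) < r * (s - 1) + (r - t) →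
        r * (s - 1) ≤ (v : ℕ) → (v : ℕ) < r * (s - 1) + (r - t) → u ≠ v → c' u ≠ c' v) ∧
      (∀ i j : Fin r,
        (Finset.univ.filter
          (fun v : Fin n => (v : ℕ) < r * (s - 1) + (r - t) ∧ c' v = i)).card ≤
        (Finset.univ.filter
          (fun v : Fin n => (v : ℕ) < r * (s - 1) + (r - t) ∧ c' v = j)).card + 1) := by
  generalize r * (s - 1) = k at *
  obtain ⟨c', hagree, hHproper⟩ := exists_extend_coloring_of_card_earlier_neighbors_lt
    (G ⊔ cliqueOn {w : Fin n | k ≤ (w : ℕ)}) (N := k + (r - t)) c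
    (fun u v hu hv hadj => hproper u v hu hv (hadj.resolve_right fun h => by simp at h; omega))
    (fun v _ hvN => (G.card_earlier_neighbors_sup_cliqueOn_le k v).trans_lt
      (by have := hdegord v; omega))
  have hdistinct : ∀ u v : Fin n, k ≤ (u : ℕ) → (u : ℕ) < k + (r - t) → k ≤ (v : ℕ) →
      (v : ℕ) < k + (r - t) → u ≠ v → c' u ≠ c' v := fun u v hku hu hkv hv huv =>
    hHproper u v hu hv (Or.inr (cliqueOn_adj.mpr ⟨huv, hku, hkv⟩))
  have hsizes' : ∀ i, #(univ.filter fun v : Fin n => (v : ℕ) < k ∧ c' v = i) = s - 1 := by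
    intro i
    rw [← hsizes i]
    exact congrArg card (filter_congr fun v _ => and_congr_right fun hv => by rw [hagree v hv])
  refine ⟨c', hagree, fun u v hu hv hadj => hHproper u v hu hv (Or.inl hadj), hdistinct,
    fun i j => ?_⟩
  calc #(univ.filter fun v : Fin n => (v : ℕ) < k + (r - t) ∧ c' v = i)
      ≤ #(univ.filter fun v : Fin n => (v : ℕ) < k ∧ c' v = i) + 1 :=
        card_filter_lt_and_eq_le_succ c' hdistinct i
    _ = #(univ.filter fun v : Fin n => (v : ℕ) < k ∧ c' v = j) + 1 := by rw [hsizes', hsizes']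
    _ ≤ #(univ.filter fun v : Fin n => (v : ℕ) < k + (r - t) ∧ c' v = j) + 1 := by
        gcongr with v
        omega

/-- Greedy extension step: let `G` be `d`-degenerate with `n = rs − t` vertices,
`d < t ≤ r − 1`, `r ≥ d + 1`, with a degeneracy ordering given by the natural order on
`Fin n`. If the subgraph induced by the first `r(s−1)` vertices has an equitable
`r`-coloring with all classes of size `s−1`, then this coloring extends to a proper
coloring of the first `r(s−1)+(r−t)` vertices in which the new vertices receive
pairwise distinct colors, and the resulting coloring is equitable. -/
theorem stmt_5 (d r s t n : ℕ) (hn : n = r * s - t) (hs : 1 ≤ s)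
    (ht1 : d < t) (ht2 : t ≤ r - 1) (hr : d + 1 ≤ r)
    (G : SimpleGraph (Fin n)) [DecidableRel G.Adj]
    (hdegord : ∀ i : Fin n,
      (Finset.univ.filter (fun j : Fin n => G.Adj i j ∧ (j : ℕ) < (i : ℕ))).card ≤ d)
    (c : Fin n → Fin r)
    (hproper : ∀ u v : Fin n, (u : ℕ) < r * (s - 1) → (v : ℕ) < r * (s - 1) →
      G.Adj u v → c u ≠ c v)
    (hsizes : ∀ i : Fin r,
      (Finset.univ.filter (fun v : Fin n => (v : ℕ) < r * (s - 1) ∧ c v = i)).card = s - 1) :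
    ∃ c' : Fin n → Fin r,
      (∀ v : Fin n, (v : ℕ) < r * (s - 1) → c' v = c v) ∧
      (∀ u v : Fin n, (u : ℕ) < r * (s - 1) + (r - t) → (v : ℕ) < r * (s - 1) + (r - t) →
        G.Adj u v → c' u ≠ c' v) ∧
      (∀ u v : Fin n, r * (s - 1) ≤ (u : ℕ) → (u : ℕ) < r * (s - 1) + (r - t) →
        r * (s - 1) ≤ (v : ℕ) → (v : ℕ) < r * (s - 1) + (r - t) → u ≠ v → c' u ≠ c' v) ∧
      (∀ i j : Fin r,
        (Finset.univ.filter
          (fun v : Fin n => (v : ℕ) < r * (s - 1) + (r - t) ∧ c' v = i)).card ≤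
        (Finset.univ.filter
          (fun v : Fin n => (v : ℕ) < r * (s - 1) + (r - t) ∧ c' v = j)).card + 1) :=
  stmt_5_general d r s t n ht1 G hdegord c hproper hsizes
end

section
/- Let m₁, m₂ be positive reals with 1 ≤ m₁/m₂ ≤ 1.8, let β ∈ [0.5, 1) satisfy 2m₂(1−β)(1+β)² = m₁β(2+β), and set r₀ = 2m₁/(1−β) and a₀ = (r₀ − √(r₀² − 4m₂r₀))/2. Then (r₀ + √(r₀² − 4m₂r₀))/2 ≥ 2m₁. -/
lemma four_mul_le_two_mul_div_one_sub {m β : ℝ} (hm : 0 ≤ m) (hβ : 1 / 2 ≤ β) (hβ₁ : β < 1) :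
    4 * m ≤ 2 * m / (1 - β) := by
  rw [le_div_iff₀ (by linarith)]
  nlinarith

theorem stmt_7_general (m₁ m₂ β r₀ : ℝ) (hm₁ : 0 < m₁)
    (hβ : β ∈ Set.Ico (0.5 : ℝ) 1)
    (hr₀ : r₀ = 2 * m₁ / (1 - β)) :
    (r₀ + Real.sqrt (r₀ ^ 2 - 4 * m₂ * r₀)) / 2 ≥ 2 * m₁ := by
  obtain ⟨hβ₀, hβ₁⟩ := hβ
  have hr : 4 * m₁ ≤ r₀ :=
    hr₀ ▸ four_mul_le_two_mul_div_one_sub hm₁.le (by norm_num at hβ₀ ⊢; exact hβ₀) hβ₁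
  linarith [Real.sqrt_nonneg (r₀ ^ 2 - 4 * m₂ * r₀)]

/-- Under the standing hypotheses, `(r₀ + √(r₀² − 4m₂r₀))/2 ≥ 2m₁`. -/
theorem stmt_7 (m₁ m₂ β r₀ a₀ : ℝ) (hm₁ : 0 < m₁) (hm₂ : 0 < m₂)
    (h1 : 1 ≤ m₁ / m₂) (h2 : m₁ / m₂ ≤ 1.8)
    (hβ : β ∈ Set.Ico (0.5 : ℝ) 1)
    (hroot : 2 * m₂ * (1 - β) * (1 + β) ^ 2 = m₁ * β * (2 + β))
    (hr₀ : r₀ = 2 * m₁ / (1 - β))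
    (ha₀ : a₀ = (r₀ - Real.sqrt (r₀ ^ 2 - 4 * m₂ * r₀)) / 2) :
    (r₀ + Real.sqrt (r₀ ^ 2 - 4 * m₂ * r₀)) / 2 ≥ 2 * m₁ :=
  stmt_7_general m₁ m₂ β r₀ hm₁ hβ hr₀
end

section
/- Let m₁, m₂ be positive reals with 1 ≤ m₁/m₂ ≤ 1.8, let β ∈ [0.5, 1) satisfy 2m₂(1−β)(1+β)² = m₁β(2+β), and set r₀ = 2m₁/(1−β) and a₀ = (r₀ − √(r₀² − 4m₂r₀))/2. Then (1 − β²)(r₀ − 2a₀) ≥ 2m₁. -/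
/-!
The inequality is in fact an equality. Eliminating `m₁` between `r₀ (1 - β) = 2 m₁` and the
defining equation of `β` gives `4 m₂ (1 + β)² = β (2 + β) r₀`, so the discriminant
`r₀² - 4 m₂ r₀` is the perfect square `(r₀ / (1 + β))²`. Hence `r₀ - 2 a₀ = r₀ / (1 + β)` and
`(1 - β²)(r₀ - 2 a₀) = (1 - β) r₀ = 2 m₁`.
-/

lemma sq_sub_mul_eq_div_sq {r m β : ℝ} (hβ : 1 + β ≠ 0)
    (h : β * (2 + β) * r = 4 * m * (1 + β) ^ 2) :
    r ^ 2 - 4 * m * r = (r / (1 + β)) ^ 2 := by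
  have h4m : 4 * m = β * (2 + β) * r / (1 + β) ^ 2 := by
    field_simp
    linarith
  rw [h4m]
  field_simp
  ring

lemma sqrt_sq_sub_mul_eq_div {r m β : ℝ} (hr : 0 ≤ r) (hβ : 0 < 1 + β)
    (h : β * (2 + β) * r = 4 * m * (1 + β) ^ 2) :
    √(r ^ 2 - 4 * m * r) = r / (1 + β) := by
  rw [sq_sub_mul_eq_div_sq hβ.ne' h, Real.sqrt_sq (div_nonneg hr hβ.le)]

theorem stmt_9_general (m₁ m₂ β r₀ a₀ : ℝ) (hm₁ : 0 < m₁)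
    (hβ : β ∈ Set.Ico (0.5 : ℝ) 1)
    (hroot : 2 * m₂ * (1 - β) * (1 + β) ^ 2 = m₁ * β * (2 + β))
    (hr₀ : r₀ = 2 * m₁ / (1 - β))
    (ha₀ : a₀ = (r₀ - Real.sqrt (r₀ ^ 2 - 4 * m₂ * r₀)) / 2) :
    (1 - β ^ 2) * (r₀ - 2 * a₀) ≥ 2 * m₁ := by
  obtain ⟨hβ_low, hβ_lt_one⟩ := hβ
  norm_num at hβ_low
  have hsub_pos : 0 < 1 - β := by linarith
  have hr₀m₁ : r₀ * (1 - β) = 2 * m₁ := by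
    rw [hr₀]
    field_simp
  have hr₀_pos : 0 < r₀ := by
    rw [hr₀]
    positivity
  have hdisc : β * (2 + β) * r₀ = 4 * m₂ * (1 + β) ^ 2 := by
    apply mul_right_cancel₀ hsub_pos.ne'
    linear_combination β * (2 + β) * hr₀m₁ - 2 * hroot
  have hgap : r₀ - 2 * a₀ = r₀ / (1 + β) := by
    rw [ha₀, sqrt_sq_sub_mul_eq_div hr₀_pos.le (by linarith) hdisc]
    ring
  have hadd_ne : 1 + β ≠ 0 := by linarith
  apply le_of_eq
  rw [hgap, ← hr₀m₁]
  field_simp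
  ring

/-- Under the standing hypotheses, `(1 − β²)(r₀ − 2a₀) ≥ 2m₁`. -/
theorem stmt_9 (m₁ m₂ β r₀ a₀ : ℝ) (hm₁ : 0 < m₁) (hm₂ : 0 < m₂)
    (h1 : 1 ≤ m₁ / m₂) (h2 : m₁ / m₂ ≤ 1.8)
    (hβ : β ∈ Set.Ico (0.5 : ℝ) 1)
    (hroot : 2 * m₂ * (1 - β) * (1 + β) ^ 2 = m₁ * β * (2 + β))
    (hr₀ : r₀ = 2 * m₁ / (1 - β))
    (ha₀ : a₀ = (r₀ - Real.sqrt (r₀ ^ 2 - 4 * m₂ * r₀)) / 2) :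
    (1 - β ^ 2) * (r₀ - 2 * a₀) ≥ 2 * m₁ :=
  stmt_9_general m₁ m₂ β r₀ a₀ hm₁ hβ hroot hr₀ ha₀
end

section
/- For β ∈ [0.5, 1) and positive reals m₁, m₂ with 2(1−β)(1+β)²/(β(β+2)) ≥ m₁/m₂, one has 4(1+β)²m₂/(β² + 2β) ≥ 2m₂ + 2√(m₂² + m₁²/(1−β²)²). -/
/-! With `t = 1 + β` and `s = t² - 1 = β² + 2β`, the hypothesis says exactly that
`m₁ / (1 - β²) ≤ 2 t m₂ / s`. Since `s² + 4t² = (s + 2)²`, this bounds the square root by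
`m₂ (s + 2) / s`, and `2 m₂ + 2 m₂ (s + 2) / s = 4 t² m₂ / s`. -/

lemma sq_add_sq_two_mul_div_eq {m t : ℝ} (ht : t ^ 2 - 1 ≠ 0) :
    m ^ 2 + (2 * t * m / (t ^ 2 - 1)) ^ 2 = (m * (t ^ 2 + 1) / (t ^ 2 - 1)) ^ 2 := by
  field_simp
  ring

lemma sqrt_sq_add_sq_le {m x t : ℝ} (hm : 0 ≤ m) (ht : 1 < t) (hx₀ : 0 ≤ x)
    (hx : x ≤ 2 * t * m / (t ^ 2 - 1)) :
    √(m ^ 2 + x ^ 2) ≤ m * (t ^ 2 + 1) / (t ^ 2 - 1) := by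
  have hs : 0 < t ^ 2 - 1 := by nlinarith
  calc √(m ^ 2 + x ^ 2) ≤ √(m ^ 2 + (2 * t * m / (t ^ 2 - 1)) ^ 2) := by gcongr
    _ = m * (t ^ 2 + 1) / (t ^ 2 - 1) := by
      rw [sq_add_sq_two_mul_div_eq hs.ne', Real.sqrt_sq (by positivity)]

lemma div_one_sub_sq_le_of_le {m₁ m₂ β : ℝ} (hm₂ : 0 < m₂) (hβ₀ : 0 < β) (hβ₁ : β < 1)
    (h : 2 * (1 - β) * (1 + β) ^ 2 / (β * (β + 2)) ≥ m₁ / m₂) :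
    m₁ / (1 - β ^ 2) ≤ 2 * (1 + β) * m₂ / ((1 + β) ^ 2 - 1) := by
  have hs : 0 < β * (β + 2) := by positivity
  rw [ge_iff_le, div_le_div_iff₀ hm₂ hs] at h
  rw [div_le_div_iff₀ (by nlinarith) (by nlinarith)]
  nlinarith

/-- For `β ∈ [0.5, 1)` and positive reals `m₁, m₂` with
`2(1−β)(1+β)²/(β(β+2)) ≥ m₁/m₂`, one has
`4(1+β)²m₂/(β² + 2β) ≥ 2m₂ + 2√(m₂² + m₁²/(1−β²)²)`. -/
theorem stmt_13 (m₁ m₂ β : ℝ) (hm₁ : 0 < m₁) (hm₂ : 0 < m₂)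
    (hβ : β ∈ Set.Ico (0.5 : ℝ) 1)
    (h : 2 * (1 - β) * (1 + β) ^ 2 / (β * (β + 2)) ≥ m₁ / m₂) :
    4 * (1 + β) ^ 2 * m₂ / (β ^ 2 + 2 * β) ≥
      2 * m₂ + 2 * Real.sqrt (m₂ ^ 2 + m₁ ^ 2 / (1 - β ^ 2) ^ 2) := by
  obtain ⟨hβ_ge, hβ₁⟩ := hβ
  have hβ₀ : 0 < β := by norm_num at hβ_ge; linarith
  have hx₀ : 0 ≤ m₁ / (1 - β ^ 2) := div_nonneg hm₁.le (by nlinarith)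
  have hroot := sqrt_sq_add_sq_le hm₂.le (by linarith) hx₀
    (div_one_sub_sq_le_of_le hm₂ hβ₀ hβ₁ h)
  have hs : (1 + β) ^ 2 - 1 = β ^ 2 + 2 * β := by ring
  rw [hs] at hroot
  rw [← div_pow]
  have hsum : 2 * m₂ + 2 * (m₂ * ((1 + β) ^ 2 + 1) / (β ^ 2 + 2 * β))
      = 4 * (1 + β) ^ 2 * m₂ / (β ^ 2 + 2 * β) := by
    field_simp
    ring
  linarith
end

section
/- Let H be a graph whose vertex set is partitioned into r independent sets, of which a of them (class set 𝒜, union A with |A| = as − 1) and b = r − a of them (class set ℬ, union B with |B| = bs) satisfy: every vertex of B has at least one neighbor in each class of 𝒜. If every bipartite subgraph H' of H satisfies e(H') ≤ m₂·v(H'), then a(r−a)s < m₂·r·s, and hence a² − ra + m₂r > 0. -/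
/-!
The edges of `H` between `B` and the union `X` of the first `a` classes form a bipartite
spanning subgraph, on `rs − 1` vertices. Every vertex of `B` has a neighbour in each of the `a`
pairwise disjoint classes making up `X`, hence degree at least `a` in that subgraph, which
therefore has at least `|B|·a = a(r−a)s` edges. So `a(r−a)s ≤ m₂(rs − 1) < m₂rs`.
-/

open Finset

namespace SimpleGraph

variable {V : Type*} {G : SimpleGraph V}

theorem card_le_degree_of_forall_exists_adj {ι : Type*} {v : V} [Fintype (G.neighborSet v)]
    {I : Finset ι} {P : ι → Finset V} (hP : (I : Set ι).PairwiseDisjoint P)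
    (hv : ∀ i ∈ I, ∃ u ∈ P i, G.Adj v u) : #I ≤ G.degree v := by
  choose f hfP hfadj using hv
  rw [← card_attach, ← card_neighborFinset_eq_degree]
  refine card_le_card_of_injOn (fun i ↦ f i i.2)
    (fun i _ ↦ (mem_neighborFinset _ _ _).2 (hfadj i i.2)) ?_
  intro i _ j _ hij
  exact Subtype.ext (hP.elim_finset i.2 j.2 _ (hfP i i.2) (by simpa [hij] using hfP j j.2))

theorem edgeSet_toSubgraph {H : SimpleGraph V} (h : H ≤ G) :
    (toSubgraph H h).edgeSet = H.edgeSet := rfl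

theorem IsBipartite.coe_toSubgraph {H : SimpleGraph V} (hH : H.IsBipartite) (h : H ≤ G) :
    (toSubgraph H h).coe.IsBipartite :=
  hH.of_hom ⟨Subtype.val, id⟩

theorem card_mul_le_ncard_edgeSet_between [Fintype V] [DecidableEq V] [DecidableRel G.Adj]
    {s t : Finset V} (hst : Disjoint s t) {k : ℕ}
    (h : ∀ v ∈ s, k ≤ (G.between s t).degree v) : #s * k ≤ (G.between s t).edgeSet.ncard := by
  rw [Set.ncard_eq_toFinset_card', ← edgeFinset,
    ← isBipartiteWith_sum_degrees_eq_card_edges (between_isBipartiteWith (disjoint_coe.2 hst))]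
  simpa [mul_comm] using sum_le_sum h

end SimpleGraph

open SimpleGraph

theorem stmt_14_general {V : Type*} [Fintype V] [DecidableEq V] (H : SimpleGraph V)
    [DecidableRel H.Adj] (r s a : ℕ) (m₂ : ℝ) (hm₂ : 0 < m₂)
    (hs : 1 ≤ s) (har : a < r)
    (hcard : Fintype.card V = r * s - 1)
    (P : Fin r → Finset V)
    (hdisj : ∀ i j, i ≠ j → Disjoint (P i) (P j))
    (B : Finset V)
    (hB : B = (Finset.univ.filter (fun i : Fin r => a ≤ (i : ℕ))).biUnion P)
    (hBcard : B.card = (r - a) * s)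
    (hnb : ∀ v ∈ B, ∀ i : Fin r, (i : ℕ) < a → ∃ u ∈ P i, H.Adj v u)
    (hbip : ∀ H' : H.Subgraph, H'.coe.Colorable 2 →
      (H'.edgeSet.ncard : ℝ) ≤ m₂ * H'.verts.ncard) :
    (a : ℝ) * ((r : ℝ) - a) * s < m₂ * r * s ∧
    (a : ℝ) ^ 2 - r * a + m₂ * r > 0 := by
  set I := univ.filter fun i : Fin r ↦ (i : ℕ) < a
  set X := I.biUnion P
  have hBX : Disjoint B X := by
    simp only [hB, X, I, disjoint_biUnion_left, disjoint_biUnion_right, mem_filter, mem_univ,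
      true_and]
    exact fun i hi j hj ↦ hdisj j i (by rintro rfl; omega)
  have hdeg : ∀ v ∈ B, a ≤ (H.between B X).degree v := by
    intro v hv
    have hIcard : #I = a := by simp [I, Fin.card_filter_val_lt, har.le]
    rw [← hIcard]
    refine card_le_degree_of_forall_exists_adj (fun i _ j _ hij ↦ hdisj i j hij) fun i hi ↦ ?_
    obtain ⟨u, hu, hvu⟩ := hnb v hv i (mem_filter.1 hi).2
    exact ⟨u, hu, hvu, Or.inl ⟨hv, mem_biUnion.2 ⟨i, hi, hu⟩⟩⟩
  have hbound := hbip _ ((between_isBipartite (disjoint_coe.2 hBX)).coe_toSubgraph between_le)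
  rw [edgeSet_toSubgraph, toSubgraph_verts, Set.ncard_univ, Nat.card_eq_fintype_card, hcard,
    Nat.cast_sub (Nat.mul_pos (by omega) hs)] at hbound
  have hcount : (a : ℝ) * (r - a) * s ≤ m₂ * (r * s - 1) := by
    calc (a : ℝ) * (r - a) * s = (#B * a : ℕ) := by push_cast [hBcard, Nat.cast_sub har.le]; ring
      _ ≤ ((H.between B X).edgeSet.ncard : ℕ) := by
        exact_mod_cast card_mul_le_ncard_edgeSet_between hBX hdeg
      _ ≤ m₂ * (r * s - 1) := by exact_mod_cast hbound
  have hlt : (a : ℝ) * (r - a) * s < m₂ * r * s := by linarith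
  have hs' : (0 : ℝ) < s := by exact_mod_cast hs
  exact ⟨hlt, by linarith [lt_of_mul_lt_mul_right hlt hs'.le]⟩

/-- Let `H` be a graph on `rs − 1` vertices partitioned into `r` independent classes,
`a` of which (with union `A`, `|A| = as − 1`) are such that every vertex of the union
`B` of the other `b = r − a` classes (`|B| = bs`) has at least one neighbor in each of
them. If every bipartite subgraph `H'` of `H` satisfies `e(H') ≤ m₂·v(H')`, then
`a(r−a)s < m₂rs`, and hence `a² − ra + m₂r > 0`. -/
theorem stmt_14 {V : Type*} [Fintype V] [DecidableEq V] (H : SimpleGraph V)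
    [DecidableRel H.Adj] (r s a : ℕ) (m₂ : ℝ) (hm₂ : 0 < m₂)
    (hs : 1 ≤ s) (ha : 1 ≤ a) (har : a < r)
    (hcard : Fintype.card V = r * s - 1)
    (P : Fin r → Finset V)
    (hdisj : ∀ i j, i ≠ j → Disjoint (P i) (P j))
    (hcover : Finset.univ.biUnion P = Finset.univ)
    (hind : ∀ i, ∀ u ∈ P i, ∀ v ∈ P i, ¬ H.Adj u v)
    (A B : Finset V)
    (hA : A = (Finset.univ.filter (fun i : Fin r => (i : ℕ) < a)).biUnion P)
    (hB : B = (Finset.univ.filter (fun i : Fin r => a ≤ (i : ℕ))).biUnion P)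
    (hAcard : A.card = a * s - 1) (hBcard : B.card = (r - a) * s)
    (hnb : ∀ v ∈ B, ∀ i : Fin r, (i : ℕ) < a → ∃ u ∈ P i, H.Adj v u)
    (hbip : ∀ H' : H.Subgraph, H'.coe.Colorable 2 →
      (H'.edgeSet.ncard : ℝ) ≤ m₂ * H'.verts.ncard) :
    (a : ℝ) * ((r : ℝ) - a) * s < m₂ * r * s ∧
    (a : ℝ) ^ 2 - r * a + m₂ * r > 0 :=
  stmt_14_general H r s a m₂ hm₂ hs har hcard P hdisj B hB hBcard hnb hbip
end

section
/- Let r₀, m₂, a₀ be reals with a₀ = (r₀ − √(r₀² − 4m₂r₀))/2, r₀² ≥ 4m₂r₀, r₀ ≥ 3a₀ + 1, and a₀ > m₂. If an integer z satisfies ⌊a₀⌋ + 1 ≤ z ≤ r − ⌊a₀⌋ − 1 for some real r ≥ r₀ and z² − rz + m₂r > 0, then a contradiction follows; equivalently, no integer z in [⌊a₀⌋+1, r−⌊a₀⌋−1] satisfies (r−z)z < m₂r. -/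
/-!
`a₀` is the smaller root of `x² − r₀x + m₂r₀`, so `a₀(r₀ − a₀) = m₂r₀`. On `[a₀, r − a₀]` the
concave function `z ↦ (r − z)z` is at least its endpoint value `a₀(r − a₀)`, and
`a₀(r − a₀) − m₂r = (a₀ − m₂)(r − r₀) ≥ 0`.
-/

theorem sq_sub_mul_add_eq_zero_of_eq_half_sub_sqrt {a b c : ℝ} (hdisc : 4 * c ≤ b ^ 2)
    (ha : a = (b - Real.sqrt (b ^ 2 - 4 * c)) / 2) : a ^ 2 - b * a + c = 0 := by
  have hs : Real.sqrt (b ^ 2 - 4 * c) ^ 2 = b ^ 2 - 4 * c := Real.sq_sqrt (by linarith)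
  subst ha
  linear_combination hs / 4

theorem mul_sub_le_sub_mul_of_le_of_le {a r z : ℝ} (hz₁ : a ≤ z) (hz₂ : z ≤ r - a) :
    a * (r - a) ≤ (r - z) * z := by
  linear_combination mul_nonneg (sub_nonneg.2 hz₁) (sub_nonneg.2 hz₂)

theorem mul_le_mul_sub_of_quadratic_root {a m r₀ r : ℝ} (hroot : a ^ 2 - r₀ * a + m * r₀ = 0)
    (hm : m ≤ a) (hr : r₀ ≤ r) : m * r ≤ a * (r - a) := by
  linear_combination mul_nonneg (sub_nonneg.2 hm) (sub_nonneg.2 hr) + hroot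

theorem stmt_15_general (r₀ m₂ a₀ r : ℝ)
    (ha₀ : a₀ = (r₀ - Real.sqrt (r₀ ^ 2 - 4 * m₂ * r₀)) / 2)
    (hdisc : 4 * m₂ * r₀ ≤ r₀ ^ 2) (ham : m₂ < a₀)
    (hr : r₀ ≤ r) :
    ∀ z : ℤ, ((⌊a₀⌋ : ℝ) + 1 ≤ (z : ℝ)) → ((z : ℝ) ≤ r - (⌊a₀⌋ : ℝ) - 1) →
      ¬ ((r - (z : ℝ)) * (z : ℝ) < m₂ * r) := by
  intro z hz₁ hz₂
  have hroot : a₀ ^ 2 - r₀ * a₀ + m₂ * r₀ = 0 :=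
    sq_sub_mul_add_eq_zero_of_eq_half_sub_sqrt (by linarith) (by rw [ha₀, mul_assoc])
  have hfloor : (⌊a₀⌋ : ℝ) ≤ a₀ := Int.floor_le a₀
  have hfloor' : a₀ < (⌊a₀⌋ : ℝ) + 1 := Int.lt_floor_add_one a₀
  refine not_lt.2 ((mul_le_mul_sub_of_quadratic_root hroot ham.le hr).trans ?_)
  exact mul_sub_le_sub_mul_of_le_of_le (by linarith) (by linarith)

/-- Let `a₀ = (r₀ − √(r₀² − 4m₂r₀))/2` with `r₀² ≥ 4m₂r₀`, `r₀ ≥ 3a₀ + 1` and `a₀ > m₂`.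
Then for every real `r ≥ r₀`, no integer `z` with `⌊a₀⌋ + 1 ≤ z ≤ r − ⌊a₀⌋ − 1`
satisfies `(r − z)z < m₂r`. -/
theorem stmt_15 (r₀ m₂ a₀ r : ℝ) (hm₂ : 0 < m₂)
    (ha₀ : a₀ = (r₀ - Real.sqrt (r₀ ^ 2 - 4 * m₂ * r₀)) / 2)
    (hdisc : 4 * m₂ * r₀ ≤ r₀ ^ 2) (h3 : 3 * a₀ + 1 ≤ r₀) (ham : m₂ < a₀)
    (hr : r₀ ≤ r) :
    ∀ z : ℤ, ((⌊a₀⌋ : ℝ) + 1 ≤ (z : ℝ)) → ((z : ℝ) ≤ r - (⌊a₀⌋ : ℝ) - 1) →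
      ¬ ((r - (z : ℝ)) * (z : ℝ) < m₂ * r) :=
  stmt_15_general r₀ m₂ a₀ r ha₀ hdisc ham hr
end
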